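/- For any real δ, ∫_0^∞ P_edge(σ, δ) dσ = (1/(2√(2π))) · [1 − erf(δ√2) + (1/√2) e^{-δ²} (1 + erf(δ))], where P_edge(σ, δ) = (1/(2√(2π)σ²)) e^{-1/(4σ²) + δ/σ} · [(1/√(2π)) e^{-2δ²} + (1/σ − 2δ)·(1/√(2π)) ∫_{2δ}^∞ e^{-v²/2} dv]. -/

import Mathlib

/-!
Substituting `σ = 1 / t` turns `Pedge σ δ dσ` into
`(4π)⁻¹ e^{-t²/4 + δt} (e^{-2δ²} + I (t - 2δ)) dt` with `I = ∫_{2δ}^∞ e^{-v²/2} dv`.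
The second summand is the exact derivative of `-2 I e^{-t²/4 + δt}`, so it integrates to `2 I`;
completing the square, `e^{-t²/4 + δt} = e^{δ²} e^{-(t/2 - δ)²}`, makes the first a Gaussian tail.
Both Gaussian tails are expressed through `erf`.
-/

open MeasureTheory Real Filter

noncomputable def erf (x : ℝ) : ℝ := (2 / Real.sqrt π) * ∫ u in (0 : ℝ)..x, Real.exp (-u ^ 2)

noncomputable def Pedge (σ δ : ℝ) : ℝ :=
  (1 / (2 * Real.sqrt (2 * π) * σ ^ 2)) * Real.exp (-1 / (4 * σ ^ 2) + δ / σ) *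
    ((1 / Real.sqrt (2 * π)) * Real.exp (-2 * δ ^ 2) +
      (1 / σ - 2 * δ) * (1 / Real.sqrt (2 * π)) * ∫ v in Set.Ioi (2 * δ), Real.exp (-v ^ 2 / 2))

open Set

section ChangeOfVariables

variable {E : Type*} [NormedAddCommGroup E] [NormedSpace ℝ E]

theorem integral_comp_add_right_Ioi (g : ℝ → E) (a d : ℝ) :
    ∫ x in Ioi a, g (x + d) = ∫ x in Ioi (a + d), g x := by
  rw [← integral_indicator measurableSet_Ioi, ← integral_indicator measurableSet_Ioi]
  conv_rhs => rw [← integral_add_right_eq_self _ d]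
  congr 1 with x
  simp [indicator_apply]

theorem integral_comp_inv_Ioi (g : ℝ → E) :
    ∫ x in Ioi (0 : ℝ), (x ^ 2)⁻¹ • g x⁻¹ = ∫ y in Ioi (0 : ℝ), g y := by
  rw [← integral_comp_rpow_Ioi g (p := -1) (by norm_num)]
  refine setIntegral_congr_fun measurableSet_Ioi fun x hx => ?_
  have hx : 0 ≤ x := le_of_lt hx
  norm_num [Real.rpow_neg hx, show (-1 - 1 : ℝ) = -(2 : ℕ) by norm_num, Real.rpow_natCast]

end ChangeOfVariables

theorem erf_neg (x : ℝ) : erf (-x) = -erf x := by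
  have h := intervalIntegral.integral_comp_neg (a := 0) (b := x) fun u => exp (-u ^ 2)
  simp only [neg_sq, neg_zero] at h
  rw [erf, erf, intervalIntegral.integral_symm, ← h, mul_neg]

theorem integral_exp_neg_sq_Ioi (a : ℝ) :
    ∫ u in Ioi a, exp (-u ^ 2) = √π / 2 * (1 - erf a) := by
  have hint : Integrable fun u : ℝ => exp (-u ^ 2) := by
    simpa using integrable_exp_neg_mul_sq one_pos
  have hsplit := intervalIntegral.integral_Ioi_sub_Ioi' hint.integrableOn hint.integrableOn
    (a := 0) (b := a)
  have hhalf : ∫ u in Ioi (0 : ℝ), exp (-u ^ 2) = √π / 2 := by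
    simpa using integral_gaussian_Ioi 1
  rw [hhalf] at hsplit
  rw [erf, ← hsplit]
  field_simp
  ring

theorem integral_exp_neg_sq_mul_sq_Ioi (a : ℝ) {c : ℝ} (hc : 0 < c) :
    ∫ x in Ioi a, exp (-c ^ 2 * x ^ 2) = √π / (2 * c) * (1 - erf (c * a)) := by
  simp_rw [neg_mul, ← mul_pow]
  rw [integral_comp_mul_left_Ioi (fun y => exp (-y ^ 2)) a hc, integral_exp_neg_sq_Ioi,
    smul_eq_mul]
  field_simp

theorem integral_exp_neg_sq_div_two_Ioi (a : ℝ) :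
    ∫ v in Ioi a, exp (-v ^ 2 / 2) = √2 * √π / 2 * (1 - erf (a / √2)) := by
  have hc : (0 : ℝ) < (√2)⁻¹ := by positivity
  have h := integral_exp_neg_sq_mul_sq_Ioi a hc
  rw [inv_pow, sq_sqrt zero_le_two] at h
  have hv (v : ℝ) : -v ^ 2 / 2 = -2⁻¹ * v ^ 2 := by ring
  simp_rw [hv, h, div_eq_inv_mul a]
  field_simp

theorem exp_neg_sq_div_four_add_mul_eq (δ t : ℝ) :
    exp (-t ^ 2 / 4 + δ * t) = exp (δ ^ 2) * exp (-(1 / 2) ^ 2 * (t + -(2 * δ)) ^ 2) := by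
  rw [← exp_add]
  ring_nf

theorem integrable_exp_neg_sq_div_four_add_mul (δ : ℝ) :
    Integrable fun t => exp (-t ^ 2 / 4 + δ * t) := by
  simp_rw [exp_neg_sq_div_four_add_mul_eq]
  exact ((integrable_exp_neg_mul_sq (by positivity)).comp_add_right _).const_mul _

theorem integrable_sub_mul_exp_neg_sq_div_four_add_mul (δ : ℝ) :
    Integrable fun t => (t - 2 * δ) * exp (-t ^ 2 / 4 + δ * t) := by
  simp_rw [exp_neg_sq_div_four_add_mul_eq, sub_eq_add_neg, mul_left_comm _ (exp (δ ^ 2))]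
  exact ((integrable_mul_exp_neg_mul_sq (by positivity)).comp_add_right _).const_mul _

theorem integral_exp_neg_sq_div_four_add_mul_Ioi_zero (δ : ℝ) :
    ∫ t in Ioi (0 : ℝ), exp (-t ^ 2 / 4 + δ * t) = √π * exp (δ ^ 2) * (1 + erf δ) := by
  simp_rw [exp_neg_sq_div_four_add_mul_eq]
  rw [integral_const_mul, integral_comp_add_right_Ioi (fun x => exp (-(1 / 2) ^ 2 * x ^ 2)),
    integral_exp_neg_sq_mul_sq_Ioi _ (by norm_num)]
  rw [show (1 / 2 : ℝ) * (0 + -(2 * δ)) = -δ by ring, erf_neg]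
  field_simp
  ring

theorem integral_sub_mul_exp_neg_sq_div_four_add_mul_Ioi_zero (δ : ℝ) :
    ∫ t in Ioi (0 : ℝ), (t - 2 * δ) * exp (-t ^ 2 / 4 + δ * t) = 2 := by
  have hderiv (t : ℝ) : HasDerivAt (fun t => -2 * exp (-t ^ 2 / 4 + δ * t))
      ((t - 2 * δ) * exp (-t ^ 2 / 4 + δ * t)) t := by
    have hq : HasDerivAt (fun t : ℝ => -t ^ 2 / 4 + δ * t) (-t / 2 + δ) t :=
      (((hasDerivAt_pow 2 t).neg.div_const 4).add ((hasDerivAt_id t).const_mul δ)).congr_deriv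
        (by norm_num; ring)
    exact (hq.exp.const_mul (-2)).congr_deriv (by ring)
  have hquad : Tendsto (fun t : ℝ => -t ^ 2 / 4 + δ * t) atTop atBot := by
    have hlin : Tendsto (fun t : ℝ => -t / 4 + δ) atTop atBot :=
      tendsto_atBot_add_const_right _ δ (tendsto_neg_atTop_atBot.atBot_div_const (by norm_num))
    exact (tendsto_id.atTop_mul_atBot₀ hlin).congr fun t => by simp only [id]; ring
  have hlim : Tendsto (fun t => -2 * exp (-t ^ 2 / 4 + δ * t)) atTop (nhds 0) := by
    simpa using (tendsto_exp_atBot.comp hquad).const_mul (-2)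
  rw [integral_Ioi_of_hasDerivAt_of_tendsto' (fun t _ => hderiv t)
    (integrable_sub_mul_exp_neg_sq_div_four_add_mul δ).integrableOn hlim]
  norm_num

theorem inv_sq_mul_Pedge_inv {t : ℝ} (ht : 0 < t) (δ : ℝ) :
    (t ^ 2)⁻¹ * Pedge t⁻¹ δ = (4 * π)⁻¹ * (exp (-2 * δ ^ 2) * exp (-t ^ 2 / 4 + δ * t) +
      (∫ v in Ioi (2 * δ), exp (-v ^ 2 / 2)) * ((t - 2 * δ) * exp (-t ^ 2 / 4 + δ * t))) := by
  have hexp : -1 / (4 * t⁻¹ ^ 2) + δ / t⁻¹ = -t ^ 2 / 4 + δ * t := by field_simp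
  have hsq : √(2 * π) ^ 2 = 2 * π := sq_sqrt (by positivity)
  rw [Pedge, hexp]
  field_simp
  rw [hsq]
  ring

theorem stmt10 (δ : ℝ) :
    (∫ σ in Set.Ioi (0 : ℝ), Pedge σ δ)
    = (1 / (2 * Real.sqrt (2 * π))) *
        (1 - erf (δ * Real.sqrt 2) + (1 / Real.sqrt 2) * Real.exp (-δ ^ 2) * (1 + erf δ)) := by
  rw [← integral_comp_inv_Ioi]
  simp_rw [smul_eq_mul]
  rw [setIntegral_congr_fun measurableSet_Ioi fun t ht => inv_sq_mul_Pedge_inv ht δ,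
    integral_const_mul,
    integral_add ((integrable_exp_neg_sq_div_four_add_mul δ).const_mul _).integrableOn
      ((integrable_sub_mul_exp_neg_sq_div_four_add_mul δ).const_mul _).integrableOn,
    integral_const_mul, integral_const_mul, integral_exp_neg_sq_div_four_add_mul_Ioi_zero,
    integral_sub_mul_exp_neg_sq_div_four_add_mul_Ioi_zero, integral_exp_neg_sq_div_two_Ioi]
  have harg : 2 * δ / √2 = δ * √2 := by
    rw [div_eq_iff (by positivity), mul_assoc, mul_self_sqrt zero_le_two, mul_comm]
  have hexp : exp (-2 * δ ^ 2) * exp (δ ^ 2) = exp (-δ ^ 2) := by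
    rw [← exp_add]
    ring_nf
  have hπ : π = √π ^ 2 := (sq_sqrt pi_pos.le).symm
  rw [harg, sqrt_mul zero_le_two, ← mul_assoc, mul_left_comm _ √π, mul_assoc √π, hexp]
  nth_rewrite 1 [hπ]
  field_simp
  linear_combination (2 * exp (-δ ^ 2) * (1 + erf δ) + 2 * √2 * (1 - erf (δ * √2))) *
    sq_sqrt zero_le_two
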